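/- Let T be a dagger Frobenius monad on a dagger category C. An Eilenberg–Moore algebra (A, a) is a Frobenius–Eilenberg–Moore algebra (i.e. satisfies μ_A ∘ T(a)† = T(a) ∘ μ_A†) if and only if a† : A ⟶ T A is an algebra homomorphism from (A, a) to the free algebra (T A, μ_A), i.e. μ_A ∘ T(a†) = a† ∘ a. -/

import Mathlib

/-!
The Frobenius law for an algebra `a : T A ⟶ A` says exactly that `T(a) ∘ μ_A†` is self-adjoint,
so if `a†` is a homomorphism to the free algebra then daggering `μ_A ∘ T(a†) = a† ∘ a` gives the
law. Conversely, the Frobenius law yields the formula `a† = T(a) ∘ μ_A† ∘ η_A`, and with it one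
checks that the dagger of a homomorphism between Frobenius algebras is again a homomorphism. Free
algebras are Frobenius because the monad is, and `a` itself is a homomorphism from the free algebra
`(T A, μ_A)` to `(A, a)`, so `a†` is a homomorphism back.
-/

open CategoryTheory

/-- A dagger on a category: an involutive, identity-on-objects, contravariant endofunctor. -/
class DaggerCategory (C : Type*) [Category C] where
  dag : ∀ {A B : C}, (A ⟶ B) → (B ⟶ A)
  dag_id : ∀ (A : C), dag (𝟙 A) = 𝟙 A
  dag_comp : ∀ {A B D : C} (f : A ⟶ B) (g : B ⟶ D), dag (f ≫ g) = dag g ≫ dag f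
  dag_dag : ∀ {A B : C} (f : A ⟶ B), dag (dag f) = f

open DaggerCategory

theorem DaggerCategory.dag_injective {C : Type*} [Category C] [DaggerCategory C] {A B : C} :
    Function.Injective (dag : (A ⟶ B) → (B ⟶ A)) :=
  fun f g h => by rw [← dag_dag f, h, dag_dag]

namespace CategoryTheory

theorem Monad.unit_comp_map_comp_mu {C : Type*} [Category C] (T : Monad C) {X Y : C}
    (f : X ⟶ T.obj Y) : T.η.app X ≫ T.map f ≫ T.μ.app Y = f := by
  rw [← Category.assoc, ← T.unit_naturality, Category.assoc, T.left_unit]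
  exact Category.comp_id f

variable {C : Type*} [Category C] [DaggerCategory C]

def Functor.IsDagger {D : Type*} [Category D] [DaggerCategory D] (F : C ⥤ D) : Prop :=
  ∀ ⦃X Y : C⦄ (f : X ⟶ Y), F.map (dag f) = dag (F.map f)

theorem Functor.IsDagger.comp {D E : Type*} [Category D] [DaggerCategory D] [Category E]
    [DaggerCategory E] {F : C ⥤ D} {G : D ⥤ E} (hF : F.IsDagger) (hG : G.IsDagger) :
    (F ⋙ G).IsDagger :=
  fun X Y f => by simp only [Functor.comp_map, hF f, hG (F.map f)]

theorem NatTrans.dag_app_naturality {D : Type*} [Category D] [DaggerCategory D] {F G : C ⥤ D}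
    (hF : F.IsDagger) (hG : G.IsDagger) (α : F ⟶ G) {X Y : C} (f : X ⟶ Y) :
    G.map f ≫ dag (α.app Y) = dag (α.app X) ≫ F.map f := by
  have h := congrArg dag (α.naturality (dag f))
  rwa [dag_comp, dag_comp, hF f, hG f, dag_dag, dag_dag, eq_comm] at h

namespace Monad

variable (T : Monad C)

def IsFrobenius {A : C} (a : T.obj A ⟶ A) : Prop :=
  dag (T.map a) ≫ T.μ.app A = dag (T.μ.app A) ≫ T.map a

def IsAlgebraHom {A B : C} (a : T.obj A ⟶ A) (b : T.obj B ⟶ B) (f : A ⟶ B) : Prop :=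
  T.map f ≫ b = a ≫ f

variable {T}

theorem dag_mu_naturality (hT : (T : C ⥤ C).IsDagger) {X Y : C} (f : X ⟶ Y) :
    T.map f ≫ dag (T.μ.app Y) = dag (T.μ.app X) ≫ T.map (T.map f) :=
  NatTrans.dag_app_naturality (hT.comp hT) hT T.μ f

theorem IsFrobenius.dag_eq (hT : (T : C ⥤ C).IsDagger) {A : C} {a : T.obj A ⟶ A}
    (ha : T.IsFrobenius a) : dag a = T.η.app A ≫ dag (T.μ.app A) ≫ T.map a := by
  rw [← ha, ← hT a, T.unit_comp_map_comp_mu]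

theorem IsAlgebraHom.dag_of_isFrobenius (hT : (T : C ⥤ C).IsDagger) {A B : C} {a : T.obj A ⟶ A}
    {b : T.obj B ⟶ B} {f : A ⟶ B} (ha : T.IsFrobenius a) (hb : T.IsFrobenius b)
    (hf : T.IsAlgebraHom a b f) : T.IsAlgebraHom b a (dag f) := by
  apply dag_injective
  calc dag (T.map (dag f) ≫ a)
      = T.η.app A ≫ dag (T.μ.app A) ≫ T.map (T.map f ≫ b) := by
        rw [dag_comp, hT f, dag_dag, ha.dag_eq hT, Category.assoc, Category.assoc,
          ← Functor.map_comp, ← hf]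
    _ = (T.η.app A ≫ T.map f) ≫ dag (T.μ.app B) ≫ T.map b := by
        rw [Functor.map_comp, ← reassoc_of% (dag_mu_naturality hT f), Category.assoc]
    _ = dag (b ≫ dag f) := by
        rw [← T.unit_naturality, Category.assoc, ← hb.dag_eq hT, dag_comp, dag_dag]

theorem isFrobenius_mu (hT : (T : C ⥤ C).IsDagger) {A : C}
    (hfrob : dag (T.μ.app (T.obj A)) ≫ T.map (T.μ.app A)
      = T.map (dag (T.μ.app A)) ≫ T.μ.app (T.obj A)) :
    T.IsFrobenius (T.μ.app A) := by
  rw [IsFrobenius, ← hT, hfrob]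

theorem isFrobenius_of_isAlgebraHom_dag (hT : (T : C ⥤ C).IsDagger) {A : C} {a : T.obj A ⟶ A}
    (h : T.IsAlgebraHom a (T.μ.app A) (dag a)) : T.IsFrobenius a := by
  have h' := congrArg dag h
  rw [dag_comp, dag_comp, ← hT, dag_dag] at h'
  rw [IsFrobenius, ← hT, h']
  exact h

end Monad

end CategoryTheory

theorem fem_iff_dagger_hom_general {C : Type*} [Category C] [DaggerCategory C] (T : Monad C)
    (hT : ∀ {A B : C} (f : A ⟶ B), T.map (dag f) = dag (T.map f))
    (hfrob : ∀ A : C,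
      dag (T.μ.app (T.obj A)) ≫ T.map (T.μ.app A)
        = T.map (dag (T.μ.app A)) ≫ T.μ.app (T.obj A))
    {A : C} (a : T.obj A ⟶ A)
    (ha₂ : T.map a ≫ a = T.μ.app A ≫ a) :
    (dag (T.map a) ≫ T.μ.app A = dag (T.μ.app A) ≫ T.map a) ↔
    (T.map (dag a) ≫ T.μ.app A = a ≫ dag a) := by
  have hT' : (T : C ⥤ C).IsDagger := fun _ _ f => hT f
  constructor
  · intro ha
    exact Monad.IsAlgebraHom.dag_of_isFrobenius hT' (Monad.isFrobenius_mu hT' (hfrob A)) ha ha₂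
  · exact Monad.isFrobenius_of_isAlgebraHom_dag hT'

/-- An Eilenberg–Moore algebra is Frobenius–Eilenberg–Moore iff `a†` is an algebra
homomorphism from `(A, a)` to the free algebra `(T A, μ_A)`. -/
theorem fem_iff_dagger_hom {C : Type*} [Category C] [DaggerCategory C] (T : Monad C)
    (hT : ∀ {A B : C} (f : A ⟶ B), T.map (dag f) = dag (T.map f))
    (hfrob : ∀ A : C,
      dag (T.μ.app (T.obj A)) ≫ T.map (T.μ.app A)
        = T.map (dag (T.μ.app A)) ≫ T.μ.app (T.obj A))
    {A : C} (a : T.obj A ⟶ A)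
    (ha₁ : T.η.app A ≫ a = 𝟙 A) (ha₂ : T.map a ≫ a = T.μ.app A ≫ a) :
    (dag (T.map a) ≫ T.μ.app A = dag (T.μ.app A) ≫ T.map a) ↔
    (T.map (dag a) ≫ T.μ.app A = a ≫ dag a) :=
  fem_iff_dagger_hom_general T hT hfrob a ha₂
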